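/- If l₁ and l₂ are association lists of (key × β) pairs each of whose key lists is prefix-free and strictly increasing in the lexicographic order, then the association list prepend_all [L] l₁ ++ prepend_all [R] l₂ also has a key list that is prefix-free and strictly increasing in the lexicographic order. -/
import Mathlib


/-- A side is `L` or `R`. -/
inductive Side : Type
  | L | R
deriving DecidableEq, Repr

/-- A key is a list of sides. -/
abbrev Key := List Side

/-- The strict order `L < R` on sides. -/
def Side.lt : Side → Side → Prop := fun a b => a = Side.L ∧ b = Side.R

/-- The strict lexicographic order on keys induced by `L < R`. -/
def keyLt : Key → Key → Prop := List.Lex Side.lt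

/-- A list of keys is prefix-free: for any two distinct keys in it,
neither is a prefix of the other. -/
def PrefixFreeList (ks : List Key) : Prop :=
  List.Pairwise (fun a b => ¬ a <+: b ∧ ¬ b <+: a) ks

/-- A set of keys is prefix-free. -/
def PrefixFreeSet (S : Set Key) : Prop :=
  ∀ a ∈ S, ∀ b ∈ S, a ≠ b → ¬ a <+: b

/-- A list of keys is strictly increasing in the lexicographic order. -/
def SortedKeys (ks : List Key) : Prop := List.Pairwise keyLt ks

/-- Key list of an association list is prefix-free and strictly increasing. -/
def GoodKeyList (ks : List Key) : Prop := PrefixFreeList ks ∧ SortedKeys ks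

/-- Prepend the key `s` to the key of every entry. -/
def prependAll {β : Type _} (s : Key) (l : List (Key × β)) : List (Key × β) :=
  l.map (fun e => (s ++ e.1, e.2))

/-- `lookup l k` is `some` of the value of the first entry of `l` with key `k`. -/
def lookupA {β : Type _} (l : List (Key × β)) (k : Key) : Option β :=
  (l.find? (fun e => decide (e.1 = k))).map Prod.snd

lemma map_fst_prependAll {β : Type _} (s : Key) (l : List (Key × β)) :
    (prependAll s l).map Prod.fst = (l.map Prod.fst).map (s ++ ·) := by
  simp [prependAll, Function.comp]

/-- if `l₁` and `l₂` are association lists each of whose key lists is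
prefix-free and strictly increasing in the lexicographic order, then so is
`prepend_all [L] l₁ ++ prepend_all [R] l₂`. -/
theorem stmt1 {β : Type} (l₁ l₂ : List (Key × β))
    (h₁ : GoodKeyList (l₁.map Prod.fst)) (h₂ : GoodKeyList (l₂.map Prod.fst)) :
    GoodKeyList ((prependAll [Side.L] l₁ ++ prependAll [Side.R] l₂).map Prod.fst) := by
  obtain ⟨p₁, s₁⟩ := h₁
  obtain ⟨p₂, s₂⟩ := h₂
  rw [List.map_append, map_fst_prependAll, map_fst_prependAll]
  have cross : ∀ a ∈ (l₁.map Prod.fst).map ([Side.L] ++ ·),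
      ∀ b ∈ (l₂.map Prod.fst).map ([Side.R] ++ ·),
      (¬ a <+: b ∧ ¬ b <+: a) ∧ keyLt a b := by
    intro a ha b hb
    simp only [List.mem_map] at ha hb
    obtain ⟨a', _, rfl⟩ := ha
    obtain ⟨b', _, rfl⟩ := hb
    refine ⟨⟨?_, ?_⟩, ?_⟩
    · rintro ⟨t, ht⟩; simp at ht
    · rintro ⟨t, ht⟩; simp at ht
    · exact List.Lex.rel ⟨rfl, rfl⟩
  constructor
  · unfold PrefixFreeList at *
    rw [List.pairwise_append]
    refine ⟨?_, ?_, fun a ha b hb => (cross a ha b hb).1⟩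
    · rw [List.pairwise_map]
      refine p₁.imp_of_mem ?_
      intro a b _ _ ⟨h1, h2⟩
      constructor
      · rintro ⟨t, ht⟩; exact h1 ⟨t, by simpa using ht⟩
      · rintro ⟨t, ht⟩; exact h2 ⟨t, by simpa using ht⟩
    · rw [List.pairwise_map]
      refine p₂.imp_of_mem ?_
      intro a b _ _ ⟨h1, h2⟩
      constructor
      · rintro ⟨t, ht⟩; exact h1 ⟨t, by simpa using ht⟩
      · rintro ⟨t, ht⟩; exact h2 ⟨t, by simpa using ht⟩
  · unfold SortedKeys at *
    rw [List.pairwise_append]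
    refine ⟨?_, ?_, fun a ha b hb => (cross a ha b hb).2⟩
    · rw [List.pairwise_map]
      exact s₁.imp fun h => List.Lex.cons h
    · rw [List.pairwise_map]
      exact s₂.imp fun h => List.Lex.cons h
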